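/- arXiv:1209.4617 — 2 statements merged into one kernel-verified Lean document; each statement's English description precedes it below -/
import Mathlib

section
/- Let 𝒢 be a snake graph with sign function f, and let P be a perfect matching of 𝒢 consisting only of boundary edges. Let NE denote the set of boundary edges of 𝒢 that are north or east edges of their tile, and SW the set of boundary edges that are south or west edges of their tile. Then any two edges of P that both lie in NE, or both lie in SW, have the same sign under f, and any edge of P in NE and any edge of P in SW have opposite signs under f. -/
/-!
Basic definitions: tiles, snake graphs, perfect matchings, sign functions.

A tile is a unit square in the plane, identified by the coordinates of its
south-west corner.  An edge of the integer grid is encoded as a pair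
`(p, b) : (ℤ × ℤ) × Bool` where `b = true` means the horizontal edge from `p`
to `p + (1,0)` and `b = false` means the vertical edge from `p` to `p + (0,1)`.

A snake graph is a sequence of tiles `G_1, …, G_d` (`d ≥ 1`) in which each
tile `G_{i+1}` is either the tile directly to the east or directly to the
north of `G_i`; this is exactly the combinatorial content of conditions
(i)–(iii) in the definition of a snake graph.  We record the position of the
first tile and the sequence of steps (`true` = east, `false` = north).
-/

abbrev Pt : Type := ℤ × ℤ

/-- An edge of the integer grid: `(p, true)` is the horizontal unit edge with left
endpoint `p`, and `(p, false)` is the vertical unit edge with bottom endpoint `p`. -/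
abbrev Edge : Type := Pt × Bool

/-- The two endpoints of an edge. -/
def Edge.ends (e : Edge) : Finset Pt :=
  {e.1, e.1 + (if e.2 then ((1 : ℤ), (0 : ℤ)) else ((0 : ℤ), (1 : ℤ)))}

/-- The south edge of the tile with south-west corner `p`. -/
def southEdge (p : Pt) : Edge := (p, true)
/-- The north edge of the tile with south-west corner `p`. -/
def northEdge (p : Pt) : Edge := (p + ((0 : ℤ), (1 : ℤ)), true)
/-- The west edge of the tile with south-west corner `p`. -/
def westEdge (p : Pt) : Edge := (p, false)
/-- The east edge of the tile with south-west corner `p`. -/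
def eastEdge (p : Pt) : Edge := (p + ((1 : ℤ), (0 : ℤ)), false)

/-- The four edges of the tile with south-west corner `p`. -/
def tileEdges (p : Pt) : Finset Edge := {southEdge p, northEdge p, westEdge p, eastEdge p}

/-- The four vertices of the tile with south-west corner `p`. -/
def tileVerts (p : Pt) : Finset Pt :=
  {p, p + ((1 : ℤ), (0 : ℤ)), p + ((0 : ℤ), (1 : ℤ)), p + ((1 : ℤ), (1 : ℤ))}

/-- A snake graph `𝒢 = (G_1, …, G_d)`, `d ≥ 1`: a sequence of tiles in which each
tile `G_{i+1}` shares exactly one edge with `G_i`, this edge being the north edge of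
`G_i` and the south edge of `G_{i+1}`, or the east edge of `G_i` and the west edge of
`G_{i+1}`.  `step i = true` means `G_{i+1}` is east of `G_i`, `step i = false` means
`G_{i+1}` is north of `G_i`; only the values `step i` for `1 ≤ i ≤ d - 1` are
relevant. -/
structure SnakeGraph where
  d : ℕ
  one_le_d : 1 ≤ d
  base : Pt
  step : ℕ → Bool

namespace SnakeGraph

/-- The south-west corner of the `i`-th tile, `1 ≤ i ≤ d`. -/
def pos (G : SnakeGraph) (i : ℕ) : Pt :=
  G.base + ∑ j ∈ Finset.Ico 1 i,
    (if G.step j then ((1 : ℤ), (0 : ℤ)) else ((0 : ℤ), (1 : ℤ)))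

/-- The set of edges of the snake graph. -/
def edges (G : SnakeGraph) : Finset Edge :=
  (Finset.Icc 1 G.d).biUnion fun i => tileEdges (G.pos i)

/-- The set of vertices of the snake graph. -/
def verts (G : SnakeGraph) : Finset Pt :=
  (Finset.Icc 1 G.d).biUnion fun i => tileVerts (G.pos i)

/-- The interior edge `e_i` shared by the tiles `G_i` and `G_{i+1}` (`1 ≤ i ≤ d-1`). -/
def intEdge (G : SnakeGraph) (i : ℕ) : Edge :=
  if G.step i then eastEdge (G.pos i) else northEdge (G.pos i)

/-- An edge is interior if it is one of the edges `e_1, …, e_{d-1}`. -/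
def IsInteriorEdge (G : SnakeGraph) (e : Edge) : Prop :=
  ∃ i, 1 ≤ i ∧ i < G.d ∧ e = G.intEdge i

/-- A boundary edge is an edge of the snake graph which is not interior. -/
def IsBoundaryEdge (G : SnakeGraph) (e : Edge) : Prop :=
  e ∈ G.edges ∧ ¬ G.IsInteriorEdge e

/-- A perfect matching of the snake graph: a set of edges of `G` such that every
vertex of `G` is incident to exactly one edge of the set. -/
def IsPerfectMatching (G : SnakeGraph) (P : Finset Edge) : Prop :=
  (∀ e ∈ P, e ∈ G.edges) ∧ ∀ v ∈ G.verts, ∃! e, e ∈ P ∧ v ∈ Edge.ends e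

/-- A sign function on the snake graph: on every tile the north and west edges have
the same sign, the south and east edges have the same sign, and the signs of the
north and south edges are opposite.  (Signs are encoded as `Bool`.) -/
def IsSignFunction (G : SnakeGraph) (f : Edge → Bool) : Prop :=
  ∀ i, 1 ≤ i → i ≤ G.d →
    f (northEdge (G.pos i)) = f (westEdge (G.pos i)) ∧
    f (southEdge (G.pos i)) = f (eastEdge (G.pos i)) ∧
    f (northEdge (G.pos i)) = ! f (southEdge (G.pos i))

end SnakeGraph

namespace SnakeGraph

/-- A boundary edge of `G` which is the north or the east edge of one of its tiles. -/
def IsNE (G : SnakeGraph) (e : Edge) : Prop :=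
  G.IsBoundaryEdge e ∧
    ∃ i, 1 ≤ i ∧ i ≤ G.d ∧ (e = northEdge (G.pos i) ∨ e = eastEdge (G.pos i))

/-- A boundary edge of `G` which is the south or the west edge of one of its tiles. -/
def IsSW (G : SnakeGraph) (e : Edge) : Prop :=
  G.IsBoundaryEdge e ∧
    ∃ i, 1 ≤ i ∧ i ≤ G.d ∧ (e = southEdge (G.pos i) ∨ e = westEdge (G.pos i))

end SnakeGraph

/-!
The checkerboard colouring `Edge.gridSign` (parity of `x + y` at the lower-left endpoint,
flipped on horizontal edges) is a sign function on every tile, and two sign functions of a snake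
graph differ by a global constant because consecutive tiles share an edge. So it suffices to
prove the claim for `gridSign`.

The vertices of a snake graph lie on consecutive antidiagonals `x + y = const`: the south-west
corner of `G_1`, the north-west and south-east corners of each `G_j`, and the north-east corner of
`G_d`; every edge joins two consecutive antidiagonals. Between the middle corners of `G_j` and
those of `G_{j+1}`, the interior edge `e_j` is the only edge that switches between the north-west
and the south-east side. Hence in a perfect matching by boundary edges exactly one middle corner
of each tile is matched upwards, and its side alternates from tile to tile. So there is a `c` such
that the corner of `G_j` matched upwards is the upper endpoint of whichever of the south and west
edges of `G_j` has `gridSign` equal to `c`; then `gridSign` is `c` on `NE ∩ P` and `!c` on `SW ∩ P`.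
-/

/-- The endpoint of `e` other than `e.1`, one antidiagonal above it. -/
def Edge.top (e : Edge) : Pt := e.1 + if e.2 then ((1 : ℤ), (0 : ℤ)) else ((0 : ℤ), (1 : ℤ))

def Edge.gridSign (e : Edge) : Bool := (e.1.1 + e.1.2).bodd ^^ e.2

namespace Edge

lemma mem_ends {v : Pt} {e : Edge} : v ∈ e.ends ↔ v = e.1 ∨ v = e.top := by
  simp [Edge.ends, Edge.top]

lemma top_ne (e : Edge) : e.top ≠ e.1 := by
  obtain ⟨p, b⟩ := e
  cases b <;> simp [Edge.top, Prod.ext_iff]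

lemma top_ne_top_not (p : Pt) (b : Bool) : Edge.top (p, b) ≠ Edge.top (p, !b) := by
  cases b <;> simp [Edge.top, Prod.ext_iff]

lemma level_top (e : Edge) : e.top.1 + e.top.2 = e.1.1 + e.1.2 + 1 := by
  obtain ⟨p, b⟩ := e
  cases b <;> simp [Edge.top] <;> ring

lemma gridSign_not (p : Pt) (b : Bool) : gridSign (p, !b) = !gridSign (p, b) := by
  simp [gridSign]

lemma gridSign_of_level_eq_add_one {p q : Pt} (h : q.1 + q.2 = p.1 + p.2 + 1) (b : Bool) :
    gridSign (q, b) = gridSign (p, !b) := by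
  simp [gridSign, h, Int.bodd_add]

lemma gridSign_top (p : Pt) (b c : Bool) : gridSign (Edge.top (p, b), c) = gridSign (p, !c) :=
  gridSign_of_level_eq_add_one (level_top (p, b)) c

end Edge

/-- The south and west edges of the tile at `p` are the edges `(p, b)`, its east and north edges
are `(Edge.top (p, b), !b)`; `Edge.top (p, true)` is the south-east corner and
`Edge.top (p, false)` the north-west corner. -/
lemma mem_tileEdges {p : Pt} {e : Edge} :
    e ∈ tileEdges p ↔ ∃ b, e = (p, b) ∨ e = (Edge.top (p, b), !b) := by
  simp only [tileEdges, southEdge, northEdge, westEdge, eastEdge, Finset.mem_insert,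
    Finset.mem_singleton, Edge.top]
  constructor
  · rintro (h | h | h | h)
    exacts [⟨true, .inl h⟩, ⟨false, .inr h⟩, ⟨false, .inl h⟩, ⟨true, .inr h⟩]
  · rintro ⟨_ | _, h | h⟩ <;> simp_all

lemma mem_tileVerts {p v : Pt} :
    v ∈ tileVerts p ↔ v = p ∨ (∃ b, v = Edge.top (p, b)) ∨ v = p + ((1 : ℤ), (1 : ℤ)) := by
  simp only [tileVerts, Edge.top, Finset.mem_insert, Finset.mem_singleton]
  constructor
  · rintro (h | h | h | h)
    exacts [.inl h, .inr (.inl ⟨true, h⟩), .inr (.inl ⟨false, h⟩), .inr (.inr h)]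
  · rintro (h | ⟨_ | _, h⟩ | h) <;> simp_all

lemma fst_mem_tileVerts {p : Pt} {e : Edge} (he : e ∈ tileEdges p) : e.1 ∈ tileVerts p := by
  obtain ⟨b, rfl | rfl⟩ := mem_tileEdges.1 he
  · exact mem_tileVerts.2 (.inl rfl)
  · exact mem_tileVerts.2 (.inr (.inl ⟨b, rfl⟩))

lemma top_mem_tileVerts {p : Pt} {e : Edge} (he : e ∈ tileEdges p) : e.top ∈ tileVerts p := by
  obtain ⟨b, rfl | rfl⟩ := mem_tileEdges.1 he
  · exact mem_tileVerts.2 (.inr (.inl ⟨b, rfl⟩))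
  · refine mem_tileVerts.2 (.inr (.inr ?_))
    cases b <;> simp [Edge.top, add_assoc]

namespace SnakeGraph

section Geometry

variable (G : SnakeGraph)

lemma pos_one : G.pos 1 = G.base := by
  simp [pos]

lemma pos_succ {i : ℕ} (hi : 1 ≤ i) : G.pos (i + 1) = Edge.top (G.pos i, G.step i) := by
  rw [pos, Finset.sum_Ico_succ_top hi, ← add_assoc]
  rfl

lemma level_pos {i : ℕ} (hi : 1 ≤ i) :
    (G.pos i).1 + (G.pos i).2 = G.base.1 + G.base.2 + i - 1 := by
  induction i, hi using Nat.le_induction with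
  | base => simp [pos_one]
  | succ i hi ih => rw [pos_succ G hi, Edge.level_top, ih]; push_cast; ring

lemma gridSign_pos_succ {j : ℕ} (hj1 : 1 ≤ j) (b : Bool) :
    Edge.gridSign (G.pos (j + 1), b) = Edge.gridSign (G.pos j, !b) :=
  Edge.gridSign_of_level_eq_add_one
    (by rw [G.level_pos hj1, G.level_pos (by omega)]; push_cast; ring) b

lemma intEdge_eq (i : ℕ) : G.intEdge i = (Edge.top (G.pos i, G.step i), !G.step i) := by
  unfold intEdge
  cases G.step i <;> rfl

lemma intEdge_mem_tileEdges (i : ℕ) : G.intEdge i ∈ tileEdges (G.pos i) :=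
  mem_tileEdges.2 ⟨G.step i, .inr (G.intEdge_eq i)⟩

lemma intEdge_mem_tileEdges_succ {i : ℕ} (hi : 1 ≤ i) :
    G.intEdge i ∈ tileEdges (G.pos (i + 1)) :=
  mem_tileEdges.2 ⟨!G.step i, .inl (by rw [G.intEdge_eq, G.pos_succ hi])⟩

lemma mem_edges {e : Edge} : e ∈ G.edges ↔ ∃ i, 1 ≤ i ∧ i ≤ G.d ∧ e ∈ tileEdges (G.pos i) := by
  simp [edges, and_assoc]

lemma mem_verts {v : Pt} : v ∈ G.verts ↔ ∃ i, 1 ≤ i ∧ i ≤ G.d ∧ v ∈ tileVerts (G.pos i) := by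
  simp [verts, and_assoc]

lemma mem_verts_of_mem_ends {e : Edge} (he : e ∈ G.edges) {v : Pt} (hv : v ∈ e.ends) :
    v ∈ G.verts := by
  obtain ⟨i, hi1, hid, hi⟩ := G.mem_edges.1 he
  refine G.mem_verts.2 ⟨i, hi1, hid, ?_⟩
  rcases Edge.mem_ends.1 hv with rfl | rfl
  exacts [fst_mem_tileVerts hi, top_mem_tileVerts hi]

lemma top_mem_verts {j : ℕ} (hj1 : 1 ≤ j) (hjd : j ≤ G.d) (b : Bool) :
    Edge.top (G.pos j, b) ∈ G.verts :=
  G.mem_verts.2 ⟨j, hj1, hjd, mem_tileVerts.2 (.inr (.inl ⟨b, rfl⟩))⟩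

lemma eq_base_of_level_le {v : Pt} (hv : v ∈ G.verts)
    (hle : v.1 + v.2 ≤ G.base.1 + G.base.2) : v = G.base := by
  obtain ⟨i, hi1, -, hi⟩ := G.mem_verts.1 hv
  have hlev := G.level_pos hi1
  rcases mem_tileVerts.1 hi with rfl | ⟨b, rfl⟩ | rfl
  · obtain rfl : i = 1 := by omega
    exact G.pos_one
  · have := Edge.level_top (G.pos i, b)
    simp only at this
    omega
  · simp only [Prod.fst_add, Prod.snd_add] at hle
    omega

lemma exists_eq_top_of_level {j : ℕ} (hj1 : 1 ≤ j) {v : Pt} (hv : v ∈ G.verts)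
    (hlev : v.1 + v.2 = (G.pos j).1 + (G.pos j).2 + 1) : ∃ b, v = Edge.top (G.pos j, b) := by
  obtain ⟨i, hi1, -, hi⟩ := G.mem_verts.1 hv
  have hi_lev := G.level_pos hi1
  have hj_lev := G.level_pos hj1
  rcases mem_tileVerts.1 hi with rfl | ⟨b, rfl⟩ | rfl
  · obtain rfl : i = j + 1 := by omega
    exact ⟨G.step j, G.pos_succ hj1⟩
  · have := Edge.level_top (G.pos i, b)
    simp only at this
    obtain rfl : i = j := by omega
    exact ⟨b, rfl⟩
  · simp only [Prod.fst_add, Prod.snd_add] at hlev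
    obtain rfl : j = i + 1 := by omega
    refine ⟨!G.step i, ?_⟩
    rw [G.pos_succ hi1]
    cases G.step i <;> simp [Edge.top, add_assoc]

lemma top_eq_of_not_isInteriorEdge {j : ℕ} (hj1 : 1 ≤ j) (hjd : j < G.d) {e : Edge}
    (he : e ∈ G.edges) (hbd : ¬G.IsInteriorEdge e) {b : Bool}
    (h1 : e.1 = Edge.top (G.pos j, b)) : e.top = Edge.top (G.pos (j + 1), b) := by
  have hlev : e.top.1 + e.top.2 = (G.pos (j + 1)).1 + (G.pos (j + 1)).2 + 1 := by
    rw [Edge.level_top, h1, G.pos_succ hj1, Edge.level_top, Edge.level_top]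
  obtain ⟨b', hb'⟩ := G.exists_eq_top_of_level (by omega)
    (G.mem_verts_of_mem_ends he (Edge.mem_ends.2 (.inr rfl))) hlev
  by_cases hbb : b' = b
  · rw [hb', hbb]
  -- `e` switches sides, which only `e_j` does
  refine absurd ⟨j, hj1, hjd, ?_⟩ hbd
  obtain ⟨p, c⟩ := e
  simp only at h1
  subst h1
  rw [G.pos_succ hj1] at hb'
  rw [intEdge_eq]
  generalize G.pos j = q at hb' ⊢
  generalize G.step j = s at hb' ⊢
  cases s <;> cases b <;> cases b' <;> cases c <;>
    simp_all [Edge.top, Prod.ext_iff] <;> omega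

end Geometry

section Signs

variable {G : SnakeGraph}

lemma isSignFunction_gridSign (G : SnakeGraph) : G.IsSignFunction Edge.gridSign := fun _ _ _ =>
  ⟨Edge.gridSign_top _ false true, (Edge.gridSign_top _ true false).symm,
    (Edge.gridSign_top _ false true).trans (Edge.gridSign_not _ true)⟩

lemma IsSignFunction.xor_eq_of_mem_tileEdges {f g : Edge → Bool} (hf : G.IsSignFunction f)
    (hg : G.IsSignFunction g) {i : ℕ} (hi1 : 1 ≤ i) (hid : i ≤ G.d) {e e' : Edge}
    (he : e ∈ tileEdges (G.pos i)) (he' : e' ∈ tileEdges (G.pos i)) :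
    (f e ^^ g e) = (f e' ^^ g e') := by
  obtain ⟨hfn, hfs, hfns⟩ := hf i hi1 hid
  obtain ⟨hgn, hgs, hgns⟩ := hg i hi1 hid
  have to_south {e : Edge} (he : e ∈ tileEdges (G.pos i)) :
      (f e ^^ g e) = (f (southEdge (G.pos i)) ^^ g (southEdge (G.pos i))) := by
    simp only [tileEdges, Finset.mem_insert, Finset.mem_singleton] at he
    rcases he with rfl | rfl | rfl | rfl
    · rfl
    · rw [hfns, hgns, Bool.not_xor_not]
    · rw [← hfn, ← hgn, hfns, hgns, Bool.not_xor_not]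
    · rw [← hfs, ← hgs]
  rw [to_south he, to_south he']

lemma IsSignFunction.exists_eq_xor {f g : Edge → Bool} (hf : G.IsSignFunction f)
    (hg : G.IsSignFunction g) : ∃ s, ∀ e ∈ G.edges, f e = (s ^^ g e) := by
  set e₀ := southEdge (G.pos 1)
  have he₀ : e₀ ∈ tileEdges (G.pos 1) := by simp [e₀, tileEdges]
  have htile : ∀ i, 1 ≤ i → i ≤ G.d → ∀ e ∈ tileEdges (G.pos i),
      (f e ^^ g e) = (f e₀ ^^ g e₀) := by
    intro i hi1
    induction i, hi1 using Nat.le_induction with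
    | base => exact fun hid e he => hf.xor_eq_of_mem_tileEdges hg le_rfl hid he he₀
    | succ i hi1 ih =>
      intro hid e he
      rw [hf.xor_eq_of_mem_tileEdges hg (by omega) hid he (G.intEdge_mem_tileEdges_succ hi1),
        ih (by omega) _ (G.intEdge_mem_tileEdges i)]
  refine ⟨f e₀ ^^ g e₀, fun e he => ?_⟩
  obtain ⟨i, hi1, hid, hi⟩ := G.mem_edges.1 he
  rw [← htile i hi1 hid e hi, Bool.xor_assoc, Bool.xor_self, Bool.xor_false]

end Signs

end SnakeGraph

def IsLowerEndpoint (P : Finset Edge) (v : Pt) : Prop := ∃ e ∈ P, e.1 = v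

namespace SnakeGraph.IsPerfectMatching

variable {G : SnakeGraph} {P : Finset Edge} (hP : G.IsPerfectMatching P)
include hP

lemma eq_of_mem_ends {e e' : Edge} (he : e ∈ P) (he' : e' ∈ P) {v : Pt} (hv : v ∈ e.ends)
    (hv' : v ∈ e'.ends) : e = e' :=
  (hP.2 v (G.mem_verts_of_mem_ends (hP.1 e he) hv)).unique ⟨he, hv⟩ ⟨he', hv'⟩

lemma not_isLowerEndpoint_top {e : Edge} (he : e ∈ P) : ¬IsLowerEndpoint P e.top := by
  rintro ⟨e', he', h⟩
  obtain rfl := hP.eq_of_mem_ends he he' (Edge.mem_ends.2 (.inr rfl))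
    (Edge.mem_ends.2 (.inl h.symm))
  exact e.top_ne h.symm

lemma isLowerEndpoint_of_forall {e : Edge} (he : e ∈ P) {w : Pt} (hw : w ∈ G.verts)
    (hne : e.top ≠ w) (hbelow : ∀ e' ∈ P, e'.top = w → e'.1 = e.1) :
    IsLowerEndpoint P w := by
  obtain ⟨e', ⟨he', hw'⟩, -⟩ := hP.2 w hw
  rcases Edge.mem_ends.1 hw' with h | h
  · exact ⟨e', he', h.symm⟩
  · obtain rfl := hP.eq_of_mem_ends he he' (Edge.mem_ends.2 (.inl rfl))
      (Edge.mem_ends.2 (.inl (hbelow e' he' h.symm).symm))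
    exact absurd h.symm hne

lemma exists_isLowerEndpoint_pos_one : ∃ b, ¬IsLowerEndpoint P (Edge.top (G.pos 1, b)) ∧
    IsLowerEndpoint P (Edge.top (G.pos 1, !b)) := by
  have hbase : G.base ∈ G.verts := G.pos_one ▸ G.mem_verts.2
    ⟨1, le_rfl, G.one_le_d, mem_tileVerts.2 (.inl rfl)⟩
  have eq_base_of_top {e : Edge} (he : e ∈ P)
      (htop : e.top.1 + e.top.2 ≤ G.base.1 + G.base.2 + 1) : e.1 = G.base :=
    G.eq_base_of_level_le (G.mem_verts_of_mem_ends (hP.1 e he) (Edge.mem_ends.2 (.inl rfl)))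
      (by linarith [e.level_top])
  obtain ⟨e, ⟨he, hv⟩, -⟩ := hP.2 _ hbase
  have he1 : e.1 = G.base := by
    rcases Edge.mem_ends.1 hv with h | h
    · exact h.symm
    · exact absurd ((eq_base_of_top he (by rw [← h]; omega)).trans h).symm e.top_ne
  obtain ⟨p, b⟩ := e
  simp only at he1
  subst he1
  refine ⟨b, G.pos_one ▸ hP.not_isLowerEndpoint_top he,
    hP.isLowerEndpoint_of_forall he (G.top_mem_verts le_rfl G.one_le_d _)
      (G.pos_one ▸ Edge.top_ne_top_not _ _) fun e' he' htop => eq_base_of_top he' ?_⟩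
  rw [htop, Edge.level_top, G.pos_one]

lemma isLowerEndpoint_succ (hPb : ∀ e ∈ P, G.IsBoundaryEdge e) {j : ℕ} (hj1 : 1 ≤ j)
    (hjd : j < G.d) {b : Bool} (hb : IsLowerEndpoint P (Edge.top (G.pos j, b)))
    (hnb : ¬IsLowerEndpoint P (Edge.top (G.pos j, !b))) :
    ¬IsLowerEndpoint P (Edge.top (G.pos (j + 1), b)) ∧
      IsLowerEndpoint P (Edge.top (G.pos (j + 1), !b)) := by
  obtain ⟨e, he, he1⟩ := hb
  have htop := G.top_eq_of_not_isInteriorEdge hj1 hjd (hP.1 e he) (hPb e he).2 he1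
  refine ⟨htop ▸ hP.not_isLowerEndpoint_top he, hP.isLowerEndpoint_of_forall he
    (G.top_mem_verts (by omega) hjd _) (htop ▸ Edge.top_ne_top_not _ _) ?_⟩
  intro e' he' htop'
  have hlev : e'.1.1 + e'.1.2 = (G.pos j).1 + (G.pos j).2 + 1 := by
    have h₁ := e'.level_top
    have h₂ := Edge.level_top (G.pos (j + 1), !b)
    have h₃ := Edge.level_top (G.pos j, G.step j)
    rw [htop'] at h₁
    rw [← G.pos_succ hj1] at h₃
    simp only at h₂ h₃
    omega
  obtain ⟨b', hb'⟩ := G.exists_eq_top_of_level hj1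
    (G.mem_verts_of_mem_ends (hP.1 e' he') (Edge.mem_ends.2 (.inl rfl))) hlev
  cases Bool.eq_or_eq_not b' b with
  | inl h => rw [hb', he1, h]
  | inr h => exact absurd ⟨e', he', h ▸ hb'⟩ hnb

lemma exists_isLowerEndpoint_iff (hPb : ∀ e ∈ P, G.IsBoundaryEdge e) :
    ∃ c, ∀ j, 1 ≤ j → j ≤ G.d → ∀ b,
      IsLowerEndpoint P (Edge.top (G.pos j, b)) ↔ Edge.gridSign (G.pos j, b) = c := by
  obtain ⟨b₀, hb₀, hnb₀⟩ := hP.exists_isLowerEndpoint_pos_one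
  refine ⟨Edge.gridSign (G.pos 1, !b₀), fun j hj1 => ?_⟩
  induction j, hj1 using Nat.le_induction with
  | base =>
    intro _ b
    cases Bool.eq_or_eq_not b b₀ with
    | inl h => simp [h, hb₀, Edge.gridSign_not]
    | inr h => simp [h, hnb₀]
  | succ j hj1 ih =>
    intro hjd b
    have ih := ih (by omega)
    obtain ⟨b₁, hb₁⟩ : ∃ b₁, Edge.gridSign (G.pos j, b₁) = Edge.gridSign (G.pos 1, !b₀) :=
      ⟨((G.pos j).1 + (G.pos j).2).bodd ^^ Edge.gridSign (G.pos 1, !b₀), by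
        simp only [Edge.gridSign, ← Bool.xor_assoc, Bool.xor_self, Bool.false_xor]⟩
    obtain ⟨hstay, hmove⟩ := hP.isLowerEndpoint_succ hPb hj1 hjd ((ih b₁).2 hb₁)
      (by simp [ih, Edge.gridSign_not, hb₁])
    cases Bool.eq_or_eq_not b b₁ with
    | inl h => simp [h, hstay, G.gridSign_pos_succ hj1, Edge.gridSign_not, hb₁]
    | inr h => simp [h, hmove, G.gridSign_pos_succ hj1, hb₁]

lemma exists_gridSign_eq (hPb : ∀ e ∈ P, G.IsBoundaryEdge e) :
    ∃ c, ∀ e ∈ P, (G.IsNE e → e.gridSign = c) ∧ (G.IsSW e → e.gridSign = !c) := by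
  obtain ⟨c, hc⟩ := hP.exists_isLowerEndpoint_iff hPb
  refine ⟨c, fun e he => ⟨?_, ?_⟩⟩
  · rintro ⟨-, i, hi1, hid, hNE⟩
    obtain ⟨b, rfl⟩ : ∃ b, e = (Edge.top (G.pos i, b), !b) :=
      hNE.elim (fun h => ⟨false, h⟩) (fun h => ⟨true, h⟩)
    rw [Edge.gridSign_top, Bool.not_not, ← hc i hi1 hid]
    exact ⟨_, he, rfl⟩
  · rintro ⟨-, i, hi1, hid, hSW⟩
    obtain ⟨b, rfl⟩ : ∃ b, e = (G.pos i, b) :=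
      hSW.elim (fun h => ⟨true, h⟩) (fun h => ⟨false, h⟩)
    exact Bool.eq_not_iff.2 ((hc i hi1 hid b).not.1 (hP.not_isLowerEndpoint_top he))

end SnakeGraph.IsPerfectMatching

/-- Let `𝒢` be a snake graph with sign function `f` and `P` a
perfect matching of `𝒢` consisting only of boundary edges.  Any two edges of `P`
which both lie in `NE`, or both lie in `SW`, have the same sign, and any edge of `P`
in `NE` and any edge of `P` in `SW` have opposite signs. -/
theorem sign_on_boundary_matching (G : SnakeGraph) (f : Edge → Bool) (P : Finset Edge)
    (hf : G.IsSignFunction f) (hP : G.IsPerfectMatching P)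
    (hPb : ∀ e ∈ P, G.IsBoundaryEdge e) :
    (∀ a ∈ P, ∀ b ∈ P,
        ((G.IsNE a ∧ G.IsNE b) ∨ (G.IsSW a ∧ G.IsSW b)) → f a = f b) ∧
    (∀ a ∈ P, ∀ b ∈ P, G.IsNE a → G.IsSW b → f a = ! f b) := by
  obtain ⟨s, hs⟩ := hf.exists_eq_xor G.isSignFunction_gridSign
  obtain ⟨c, hc⟩ := hP.exists_gridSign_eq hPb
  have hsign {e : Edge} (he : e ∈ P) : f e = (s ^^ e.gridSign) := hs e (hP.1 e he)
  refine ⟨?_, fun a ha b hb hNE hSW => ?_⟩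
  · rintro a ha b hb (⟨hNEa, hNEb⟩ | ⟨hSWa, hSWb⟩)
    · rw [hsign ha, hsign hb, (hc a ha).1 hNEa, (hc b hb).1 hNEb]
    · rw [hsign ha, hsign hb, (hc a ha).2 hSWa, (hc b hb).2 hSWb]
  · rw [hsign ha, hsign hb, (hc a ha).1 hNE, (hc b hb).2 hSW, Bool.xor_not, Bool.not_not]
end

section
/- Every nonempty snake graph admits exactly two sign functions, and these two sign functions assign opposite signs to every edge (i.e., if f is a sign function then −f is the only other sign function). -/
/-!
The pointwise difference `f e ^^ g e` of two sign functions is constant on the four edges of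
each tile, since each tile's signs are determined by the sign of its south edge. Consecutive
tiles share the edge `e_i`, so the difference is constant on the whole snake graph: `g = f` or
`g = ¬f`. A sign function exists: the checkerboard rule (parity of `x + y` at the south-west
endpoint, flipped for horizontal edges) is a sign function on every tile of `ℤ²`.
-/

def IsSignOnTile (f : Edge → Bool) (p : Pt) : Prop :=
  f (northEdge p) = f (westEdge p) ∧ f (southEdge p) = f (eastEdge p) ∧
    f (northEdge p) = ! f (southEdge p)

namespace IsSignOnTile

variable {f g : Edge → Bool} {p : Pt}

theorem not (hf : IsSignOnTile f p) : IsSignOnTile (fun e => ! f e) p := by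
  obtain ⟨hnw, hse, hns⟩ := hf
  exact ⟨by simp only [hnw], by simp only [hse], by simp only [hns]⟩

theorem xor_eq_of_mem (hf : IsSignOnTile f p) (hg : IsSignOnTile g p) {e : Edge}
    (he : e ∈ tileEdges p) : (f e ^^ g e) = (f (southEdge p) ^^ g (southEdge p)) := by
  obtain ⟨hfnw, hfse, hfns⟩ := hf
  obtain ⟨hgnw, hgse, hgns⟩ := hg
  simp only [tileEdges, Finset.mem_insert, Finset.mem_singleton] at he
  rcases he with rfl | rfl | rfl | rfl
  · rfl
  · rw [hfns, hgns, Bool.not_xor_not]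
  · rw [← hfnw, ← hgnw, hfns, hgns, Bool.not_xor_not]
  · rw [hfse, hgse]

end IsSignOnTile

def checkerboardSign (e : Edge) : Bool :=
  (e.1.1 + e.1.2).bodd != e.2

theorem isSignOnTile_checkerboardSign (p : Pt) : IsSignOnTile checkerboardSign p := by
  refine ⟨?_, ?_, ?_⟩ <;>
    simp [checkerboardSign, northEdge, southEdge, westEdge, eastEdge, Int.bodd_add]

theorem Bool.eq_or_eq_not_of_xor_eq {α : Type*} {s : Finset α} {φ ψ : α → Bool} {c : Bool}
    (h : ∀ x ∈ s, (φ x ^^ ψ x) = c) :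
    (∀ x ∈ s, ψ x = φ x) ∨ (∀ x ∈ s, ψ x = ! φ x) := by
  cases c
  · exact Or.inl fun x hx => by have := h x hx; revert this; cases φ x <;> cases ψ x <;> decide
  · exact Or.inr fun x hx => by have := h x hx; revert this; cases φ x <;> cases ψ x <;> decide

namespace SnakeGraph

variable {G : SnakeGraph} {f : Edge → Bool}

theorem IsSignFunction.isSignOnTile (hf : G.IsSignFunction f) {i : ℕ} (h1 : 1 ≤ i)
    (h2 : i ≤ G.d) : IsSignOnTile f (G.pos i) :=
  hf i h1 h2

theorem IsSignFunction.not (hf : G.IsSignFunction f) : G.IsSignFunction fun e => ! f e :=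
  fun _ h1 h2 => (hf.isSignOnTile h1 h2).not

theorem pos_succ_s4 (G : SnakeGraph) {i : ℕ} (h : 1 ≤ i) :
    G.pos (i + 1) =
      G.pos i + (if G.step i then ((1 : ℤ), (0 : ℤ)) else ((0 : ℤ), (1 : ℤ))) := by
  rw [pos, Finset.sum_Ico_succ_top h, ← add_assoc, pos]

theorem tileEdges_pos_subset_edges (G : SnakeGraph) {i : ℕ} (h1 : 1 ≤ i) (h2 : i ≤ G.d) :
    tileEdges (G.pos i) ⊆ G.edges :=
  Finset.subset_biUnion_of_mem (fun j => tileEdges (G.pos j)) (Finset.mem_Icc.2 ⟨h1, h2⟩)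

theorem intEdge_mem_tileEdges_pos (G : SnakeGraph) (i : ℕ) :
    G.intEdge i ∈ tileEdges (G.pos i) := by
  unfold intEdge
  split <;> simp [tileEdges]

theorem intEdge_mem_tileEdges_pos_succ (G : SnakeGraph) {i : ℕ} (h : 1 ≤ i) :
    G.intEdge i ∈ tileEdges (G.pos (i + 1)) := by
  rw [pos_succ_s4 G h, intEdge]
  cases G.step i
  · exact Finset.mem_insert_self _ _
  · simp [tileEdges, westEdge, eastEdge]

theorem eq_on_edges_of_eq_on_tiles {α : Type*} {φ : Edge → α}
    (h : ∀ i, 1 ≤ i → i ≤ G.d →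
      ∀ e ∈ tileEdges (G.pos i), φ e = φ (southEdge (G.pos i))) :
    ∀ e ∈ G.edges, φ e = φ (southEdge (G.pos 1)) := by
  have hsouth :
      ∀ i, 1 ≤ i → i ≤ G.d → φ (southEdge (G.pos i)) = φ (southEdge (G.pos 1)) := by
    intro i h1
    induction i, h1 using Nat.le_induction with
    | base => exact fun _ => rfl
    | succ i h1 ih =>
      intro h2
      calc φ (southEdge (G.pos (i + 1)))
          = φ (G.intEdge i) :=
            (h (i + 1) (by omega) h2 _ (G.intEdge_mem_tileEdges_pos_succ h1)).symm
        _ = φ (southEdge (G.pos i)) := h i h1 (by omega) _ (G.intEdge_mem_tileEdges_pos i)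
        _ = φ (southEdge (G.pos 1)) := ih (by omega)
  intro e he
  obtain ⟨i, hi, he⟩ := Finset.mem_biUnion.1 he
  obtain ⟨h1, h2⟩ := Finset.mem_Icc.1 hi
  exact (h i h1 h2 e he).trans (hsouth i h1 h2)

end SnakeGraph

/-- Every (nonempty) snake graph admits exactly two sign functions,
and these two assign opposite signs to every edge: there exists a sign function `f`;
for any sign function `f`, the pointwise negation `¬f` is again a sign function,
`f` and `¬f` are distinct as functions on the edge set of `𝒢`, and every sign
function agrees on the edge set of `𝒢` with `f` or with `¬f`. -/
theorem exactly_two_sign_functions (G : SnakeGraph) :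
    (∃ f : Edge → Bool, G.IsSignFunction f) ∧
    (∀ f : Edge → Bool, G.IsSignFunction f →
      (G.IsSignFunction fun e => ! f e) ∧
      (¬ ∀ e ∈ G.edges, f e = ! f e) ∧
      (∀ g : Edge → Bool, G.IsSignFunction g →
        (∀ e ∈ G.edges, g e = f e) ∨ (∀ e ∈ G.edges, g e = ! f e))) := by
  refine ⟨⟨checkerboardSign, fun i _ _ => isSignOnTile_checkerboardSign (G.pos i)⟩,
    fun f hf => ⟨hf.not, fun hneg => ?_, fun g hg => ?_⟩⟩
  · have hsouth : southEdge (G.pos 1) ∈ G.edges :=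
      G.tileEdges_pos_subset_edges le_rfl G.one_le_d (by simp [tileEdges])
    simpa using hneg _ hsouth
  · exact Bool.eq_or_eq_not_of_xor_eq <| SnakeGraph.eq_on_edges_of_eq_on_tiles
      fun i h1 h2 _ he => (hf.isSignOnTile h1 h2).xor_eq_of_mem (hg.isSignOnTile h1 h2) he
end
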